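/- arXiv:2006.06127 — 2 statements merged into one kernel-verified Lean document; each statement's English description precedes it below -/
import Mathlib

section
/- Let π be a group and let ϖ : ℤ ⊗_{ℤπ} Γ(ℤπ) → ℤπ ⊗_{ℤπ} ℤπ be the map induced by the inclusion of the symmetric tensors Γ(ℤπ) ⊆ ℤπ ⊗_ℤ ℤπ, where ℤ carries the augmentation module structure and the first tensor factor is viewed as a right module via the involution g ↦ g⁻¹. Then ϖ is injective. -/
noncomputable section

open scoped TensorProduct

open MonoidAlgebra

variable (π : Type*) [Group π]

/-- The diagonal action of `g ∈ π` on `ℤπ ⊗_ℤ ℤπ`, by left multiplication in both factors. -/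
def diagAct (g : π) :
    (MonoidAlgebra ℤ π ⊗[ℤ] MonoidAlgebra ℤ π) →+ (MonoidAlgebra ℤ π ⊗[ℤ] MonoidAlgebra ℤ π) :=
  (TensorProduct.map (AddMonoidHom.mulLeft (of ℤ π g)).toIntLinearMap
    (AddMonoidHom.mulLeft (of ℤ π g)).toIntLinearMap).toAddMonoidHom

/-- `Γ(ℤπ)`: the subgroup of symmetric tensors of `ℤπ ⊗_ℤ ℤπ`, generated by the `a ⊗ a`. -/
def symGA : AddSubgroup (MonoidAlgebra ℤ π ⊗[ℤ] MonoidAlgebra ℤ π) :=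
  AddSubgroup.closure {x | ∃ a : MonoidAlgebra ℤ π, x = a ⊗ₜ[ℤ] a}

/-- The coinvariance relations on `ℤπ ⊗_ℤ ℤπ`; the quotient by them is
`ℤπ ⊗_{ℤπ} ℤπ`, with the first factor viewed as a right module via the involution. -/
def relGA : AddSubgroup (MonoidAlgebra ℤ π ⊗[ℤ] MonoidAlgebra ℤ π) :=
  AddSubgroup.closure {x | ∃ (g : π) (m : MonoidAlgebra ℤ π ⊗[ℤ] MonoidAlgebra ℤ π),
    x = diagAct π g m - m}

/-- The coinvariance relations on `Γ(ℤπ)`; the quotient by them is `ℤ ⊗_{ℤπ} Γ(ℤπ)`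
where `ℤ` carries the augmentation module structure. -/
def relSymGA : AddSubgroup ↥(symGA π) :=
  AddSubgroup.closure {x | ∃ (g : π) (m : ↥(symGA π)),
    (x : MonoidAlgebra ℤ π ⊗[ℤ] MonoidAlgebra ℤ π) =
      diagAct π g (m : MonoidAlgebra ℤ π ⊗[ℤ] MonoidAlgebra ℤ π) - m}

namespace VarpiAux

variable {π}

/-- The involution `g ↦ g⁻¹` extended ℤ-linearly. -/
def invol : MonoidAlgebra ℤ π →ₗ[ℤ] MonoidAlgebra ℤ π :=
  MonoidAlgebra.mapDomainLinearMap ℤ ℤ (fun g : π => g⁻¹)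

lemma invol_single (g : π) (n : ℤ) :
    invol (MonoidAlgebra.single g n : MonoidAlgebra ℤ π) = MonoidAlgebra.single g⁻¹ n := by
  exact MonoidAlgebra.mapDomainLinearMap_single _ _ _

/-- `θ : ℤπ ⊗ ℤπ → ℤπ`, `a ⊗ b ↦ ι(a) * b`. -/
def theta : (MonoidAlgebra ℤ π ⊗[ℤ] MonoidAlgebra ℤ π) →ₗ[ℤ] MonoidAlgebra ℤ π :=
  TensorProduct.lift ((LinearMap.mul ℤ (MonoidAlgebra ℤ π)).comp invol)

lemma theta_tmul (a b : MonoidAlgebra ℤ π) :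
    theta (a ⊗ₜ[ℤ] b) = invol a * b := rfl

lemma diagAct_tmul (g : π) (a b : MonoidAlgebra ℤ π) :
    diagAct π g (a ⊗ₜ[ℤ] b) = (of ℤ π g * a) ⊗ₜ[ℤ] (of ℤ π g * b) := by
  simp [diagAct]

lemma invol_of_mul (g : π) (a : MonoidAlgebra ℤ π) :
    invol (of ℤ π g * a) = invol a * of ℤ π g⁻¹ := by
  induction a using MonoidAlgebra.induction with
  | zero => simp
  | single_add h n b _ _ ih =>
      have hb : (MonoidAlgebra.single h n : MonoidAlgebra ℤ π) = MonoidAlgebra.single h n := rfl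
      rw [hb, mul_add, map_add, map_add, add_mul, ih]
      congr 1
      simp only [MonoidAlgebra.of_apply, MonoidAlgebra.single_mul_single, one_mul, mul_one,
        invol_single, mul_inv_rev]

lemma theta_diagAct (g : π) (m : MonoidAlgebra ℤ π ⊗[ℤ] MonoidAlgebra ℤ π) :
    theta (diagAct π g m) = theta m := by
  induction m with
  | zero => simp [map_zero]
  | tmul a b =>
      rw [diagAct_tmul, theta_tmul, theta_tmul, invol_of_mul, mul_assoc, ← mul_assoc (of ℤ π g⁻¹),
        ← map_mul, inv_mul_cancel, map_one, one_mul]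
  | add x y hx hy => rw [map_add, map_add, map_add, hx, hy]

/-- The equivalence relation `x ~ x⁻¹` on `π`. -/
def invSetoid : Setoid π where
  r x y := y = x ∨ y = x⁻¹
  iseqv := by
    refine ⟨fun x => Or.inl rfl, ?_, ?_⟩
    · rintro x y (rfl | rfl)
      · exact Or.inl rfl
      · exact Or.inr (inv_inv x).symm
    · rintro x y z (rfl | rfl) (rfl | rfl) <;> simp

/-- A choice of representative in each orbit of the inversion. -/
def rep (x : π) : π := Quotient.out (Quotient.mk (invSetoid (π := π)) x)

lemma rep_spec (x : π) : rep x = x ∨ rep x = x⁻¹ := by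
  have h := Quotient.mk_out (s := invSetoid (π := π)) x
  rcases h with h | h
  · exact Or.inl h.symm
  · exact Or.inr ((congrArg Inv.inv h).trans (inv_inv _)).symm

lemma rep_idem (x : π) : rep (rep x) = rep x := by
  rw [rep, rep, Quotient.out_eq]

lemma rep_inv (x : π) : rep x⁻¹ = rep x := by
  rw [rep, rep]
  congr 1
  exact Quotient.sound (Or.inr (inv_inv x).symm)

lemma rep_one : rep (1 : π) = 1 := by
  rcases rep_spec (1 : π) with h | h
  · exact h
  · simpa using h

lemma rep_ne_one {x : π} (hx : x ≠ 1) : rep x ≠ 1 := by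
  rcases rep_spec x with h | h <;> rw [h] <;> simp [hx]

lemma rep_fix_inv {x y : π} (hx : rep x = x) (hy : rep y = y) (h : x⁻¹ = y) : x = y := by
  have : rep y = rep x := by rw [← h, rep_inv]
  rw [hy, hx] at this
  exact this.symm

lemma tmul_self_mem (a : MonoidAlgebra ℤ π) : a ⊗ₜ[ℤ] a ∈ symGA π :=
  AddSubgroup.subset_closure ⟨a, rfl⟩

lemma sym_pair_mem (u v : MonoidAlgebra ℤ π) : u ⊗ₜ[ℤ] v + v ⊗ₜ[ℤ] u ∈ symGA π := by
  have h := (symGA π).sub_mem ((symGA π).sub_mem (tmul_self_mem (u + v)) (tmul_self_mem u))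
    (tmul_self_mem v)
  have e : (u + v) ⊗ₜ[ℤ] (u + v) - u ⊗ₜ[ℤ] u - v ⊗ₜ[ℤ] v = u ⊗ₜ[ℤ] v + v ⊗ₜ[ℤ] u := by
    simp only [TensorProduct.tmul_add, TensorProduct.add_tmul]
    abel
  rwa [e] at h

lemma diagAct_mem_symGA (g : π) {m : MonoidAlgebra ℤ π ⊗[ℤ] MonoidAlgebra ℤ π}
    (hm : m ∈ symGA π) : diagAct π g m ∈ symGA π := by
  induction hm using AddSubgroup.closure_induction with
  | mem x hx =>
      obtain ⟨a, rfl⟩ := hx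
      rw [diagAct_tmul]
      exact tmul_self_mem _
  | zero => rw [map_zero]; exact (symGA π).zero_mem
  | add x y _ _ hx hy => rw [map_add]; exact (symGA π).add_mem hx hy
  | neg x _ hx => rw [map_neg]; exact (symGA π).neg_mem hx

/-- The image of `relSymGA` inside the big tensor product. -/
def T : AddSubgroup (MonoidAlgebra ℤ π ⊗[ℤ] MonoidAlgebra ℤ π) :=
  AddSubgroup.closure {x | ∃ (g : π) (m : MonoidAlgebra ℤ π ⊗[ℤ] MonoidAlgebra ℤ π),
    m ∈ symGA π ∧ x = diagAct π g m - m}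

lemma rel_mem_T (g : π) {m : MonoidAlgebra ℤ π ⊗[ℤ] MonoidAlgebra ℤ π} (hm : m ∈ symGA π) :
    diagAct π g m - m ∈ T (π := π) :=
  AddSubgroup.subset_closure ⟨g, m, hm, rfl⟩

lemma T_le_relGA : T (π := π) ≤ relGA π := by
  rw [T, relGA, AddSubgroup.closure_le]
  rintro x ⟨g, m, _, rfl⟩
  exact AddSubgroup.subset_closure ⟨g, m, rfl⟩

lemma theta_relGA {m : MonoidAlgebra ℤ π ⊗[ℤ] MonoidAlgebra ℤ π} (hm : m ∈ relGA π) :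
    theta m = 0 := by
  induction hm using AddSubgroup.closure_induction with
  | mem x hx =>
      obtain ⟨g, m', rfl⟩ := hx
      rw [map_sub, theta_diagAct, sub_self]
  | zero => rw [map_zero]
  | add x y _ _ hx hy => rw [map_add, hx, hy, add_zero]
  | neg x _ hx => rw [map_neg, hx, neg_zero]

open Classical in
/-- Normal-form building blocks. -/
def B (x : π) : MonoidAlgebra ℤ π ⊗[ℤ] MonoidAlgebra ℤ π :=
  if x = 1 then (1 : MonoidAlgebra ℤ π) ⊗ₜ[ℤ] (1 : MonoidAlgebra ℤ π)
  else (1 : MonoidAlgebra ℤ π) ⊗ₜ[ℤ] (of ℤ π x) + (of ℤ π x) ⊗ₜ[ℤ] (1 : MonoidAlgebra ℤ π)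

lemma B_mem_symGA (x : π) : B x ∈ symGA π := by
  rw [B]
  split
  · exact tmul_self_mem 1
  · exact sym_pair_mem _ _

lemma one_MA : (1 : MonoidAlgebra ℤ π) = MonoidAlgebra.single 1 1 := rfl

lemma theta_B_one : theta (B (1 : π)) = MonoidAlgebra.single (1 : π) (1 : ℤ) := by
  rw [B, if_pos rfl, theta_tmul, one_MA, invol_single, MonoidAlgebra.single_mul_single]
  simp

lemma theta_B_ne_one {x : π} (hx : x ≠ 1) :
    theta (B x) = MonoidAlgebra.single x (1 : ℤ) + MonoidAlgebra.single x⁻¹ (1 : ℤ) := by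
  rw [B, if_neg hx, map_add, theta_tmul, theta_tmul, one_MA, MonoidAlgebra.of_apply,
    invol_single, invol_single, MonoidAlgebra.single_mul_single, MonoidAlgebra.single_mul_single]
  simp

/-- The normal form map. -/
def NF : (π →₀ ℤ) →+ MonoidAlgebra ℤ π ⊗[ℤ] MonoidAlgebra ℤ π :=
  Finsupp.liftAddHom fun x => zmultiplesHom _ (B x)

lemma NF_single (x : π) (k : ℤ) : NF (Finsupp.single x k) = k • B x := by
  rw [NF, Finsupp.liftAddHom_apply_single, zmultiplesHom_apply]

lemma sq_one_nf (g : π) : of ℤ π g ⊗ₜ[ℤ] of ℤ π g - B (1 : π) ∈ T (π := π) := by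
  have h := rel_mem_T g (tmul_self_mem (1 : MonoidAlgebra ℤ π))
  rw [diagAct_tmul, mul_one] at h
  rw [B, if_pos rfl]
  exact h

lemma diag_pair (g x : π) :
    diagAct π g ((1 : MonoidAlgebra ℤ π) ⊗ₜ[ℤ] of ℤ π x + of ℤ π x ⊗ₜ[ℤ] (1 : MonoidAlgebra ℤ π))
      = of ℤ π g ⊗ₜ[ℤ] of ℤ π (g * x) + of ℤ π (g * x) ⊗ₜ[ℤ] of ℤ π g := by
  rw [map_add, diagAct_tmul, diagAct_tmul, mul_one, ← map_mul]

lemma pair_nf (g h : π) : ∃ n : π →₀ ℤ, (∀ x ∈ n.support, rep x = x) ∧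
    of ℤ π g ⊗ₜ[ℤ] of ℤ π h + of ℤ π h ⊗ₜ[ℤ] of ℤ π g - NF n ∈ T (π := π) := by
  by_cases hgh : g = h
  · subst hgh
    refine ⟨Finsupp.single 1 2, ?_, ?_⟩
    · intro x hx
      have := Finsupp.support_single_subset hx
      simp only [Finset.mem_singleton] at this
      subst this; exact rep_one
    · rw [NF_single]
      have h1 := sq_one_nf (π := π) g
      have key := (T (π := π)).add_mem h1 h1
      have e : (of ℤ π g ⊗ₜ[ℤ] of ℤ π g - B (1 : π)) + (of ℤ π g ⊗ₜ[ℤ] of ℤ π g - B (1 : π))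
          = of ℤ π g ⊗ₜ[ℤ] of ℤ π g + of ℤ π g ⊗ₜ[ℤ] of ℤ π g - (2 : ℤ) • B (1 : π) := by
        rw [two_zsmul]; abel
      rwa [e] at key
  · set x := g⁻¹ * h with hxdef
    have hx1 : x ≠ 1 := by
      intro h'
      exact hgh (by rw [← inv_mul_eq_one]; exact h')
    have hgx : g * x = h := by rw [hxdef, mul_inv_cancel_left]
    have hsx : (1 : MonoidAlgebra ℤ π) ⊗ₜ[ℤ] of ℤ π x + of ℤ π x ⊗ₜ[ℤ] (1 : MonoidAlgebra ℤ π)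
        ∈ symGA π := by
      have := sym_pair_mem (1 : MonoidAlgebra ℤ π) (of ℤ π x)
      exact this
    have h1 : of ℤ π g ⊗ₜ[ℤ] of ℤ π h + of ℤ π h ⊗ₜ[ℤ] of ℤ π g -
        ((1 : MonoidAlgebra ℤ π) ⊗ₜ[ℤ] of ℤ π x + of ℤ π x ⊗ₜ[ℤ] (1 : MonoidAlgebra ℤ π))
        ∈ T (π := π) := by
      have := rel_mem_T g hsx
      rwa [diag_pair, hgx] at this
    rcases rep_spec x with hr | hr
    · refine ⟨Finsupp.single x 1, ?_, ?_⟩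
      · intro z hz
        have := Finsupp.support_single_subset hz
        simp only [Finset.mem_singleton] at this
        subst this; exact hr
      · rw [NF_single, one_smul, B, if_neg hx1]
        exact h1
    · -- rep x = x⁻¹
      have hx1' : x⁻¹ ≠ 1 := fun hc => hx1 (by rwa [inv_eq_one] at hc)
      refine ⟨Finsupp.single x⁻¹ 1, ?_, ?_⟩
      · intro z hz
        have := Finsupp.support_single_subset hz
        simp only [Finset.mem_singleton] at this
        subst this; rw [rep_inv]; exact hr
      · rw [NF_single, one_smul, B, if_neg hx1']
        have h2 : (1 : MonoidAlgebra ℤ π) ⊗ₜ[ℤ] of ℤ π x⁻¹ +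
            of ℤ π x⁻¹ ⊗ₜ[ℤ] (1 : MonoidAlgebra ℤ π) -
            ((1 : MonoidAlgebra ℤ π) ⊗ₜ[ℤ] of ℤ π x + of ℤ π x ⊗ₜ[ℤ] (1 : MonoidAlgebra ℤ π))
            ∈ T (π := π) := by
          have h3 := rel_mem_T x⁻¹ hsx
          rw [diag_pair, inv_mul_cancel, map_one] at h3
          have e : of ℤ π x⁻¹ ⊗ₜ[ℤ] (1 : MonoidAlgebra ℤ π) +
              (1 : MonoidAlgebra ℤ π) ⊗ₜ[ℤ] of ℤ π x⁻¹ -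
              ((1 : MonoidAlgebra ℤ π) ⊗ₜ[ℤ] of ℤ π x +
                of ℤ π x ⊗ₜ[ℤ] (1 : MonoidAlgebra ℤ π))
              = (1 : MonoidAlgebra ℤ π) ⊗ₜ[ℤ] of ℤ π x⁻¹ +
              of ℤ π x⁻¹ ⊗ₜ[ℤ] (1 : MonoidAlgebra ℤ π) -
              ((1 : MonoidAlgebra ℤ π) ⊗ₜ[ℤ] of ℤ π x +
                of ℤ π x ⊗ₜ[ℤ] (1 : MonoidAlgebra ℤ π)) := by abel
          rwa [e] at h3
        have key := (T (π := π)).add_mem h1 ((T (π := π)).neg_mem h2)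
        have e : (of ℤ π g ⊗ₜ[ℤ] of ℤ π h + of ℤ π h ⊗ₜ[ℤ] of ℤ π g -
            ((1 : MonoidAlgebra ℤ π) ⊗ₜ[ℤ] of ℤ π x + of ℤ π x ⊗ₜ[ℤ] (1 : MonoidAlgebra ℤ π))) +
            -((1 : MonoidAlgebra ℤ π) ⊗ₜ[ℤ] of ℤ π x⁻¹ +
              of ℤ π x⁻¹ ⊗ₜ[ℤ] (1 : MonoidAlgebra ℤ π) -
              ((1 : MonoidAlgebra ℤ π) ⊗ₜ[ℤ] of ℤ π x +
                of ℤ π x ⊗ₜ[ℤ] (1 : MonoidAlgebra ℤ π)))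
            = of ℤ π g ⊗ₜ[ℤ] of ℤ π h + of ℤ π h ⊗ₜ[ℤ] of ℤ π g -
              ((1 : MonoidAlgebra ℤ π) ⊗ₜ[ℤ] of ℤ π x⁻¹ +
                of ℤ π x⁻¹ ⊗ₜ[ℤ] (1 : MonoidAlgebra ℤ π)) := by abel
        rwa [e] at key

lemma single_eq_smul_of (h : π) (k : ℤ) :
    (MonoidAlgebra.single h k : MonoidAlgebra ℤ π) = k • of ℤ π h := by
  rw [MonoidAlgebra.of_apply]
  rw [MonoidAlgebra.smul_single', mul_one]

/-- The identity cast from `π →₀ ℤ` to the monoid algebra. -/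
def toMA (b : π →₀ ℤ) : MonoidAlgebra ℤ π := MonoidAlgebra.ofCoeff b

lemma toMA_add (x y : π →₀ ℤ) : toMA (x + y) = toMA x + toMA y := rfl

lemma toMA_zero : toMA (0 : π →₀ ℤ) = (0 : MonoidAlgebra ℤ π) := rfl

lemma toMA_single (h : π) (k : ℤ) : toMA (Finsupp.single h k) = k • of ℤ π h :=
  single_eq_smul_of h k

lemma cross_nf (g : π) (b : MonoidAlgebra ℤ π) : ∃ n : π →₀ ℤ, (∀ x ∈ n.support, rep x = x) ∧
    of ℤ π g ⊗ₜ[ℤ] b + b ⊗ₜ[ℤ] of ℤ π g - NF n ∈ T (π := π) := by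
  classical
  suffices H : ∀ c : π →₀ ℤ, ∃ n : π →₀ ℤ, (∀ x ∈ n.support, rep x = x) ∧
      of ℤ π g ⊗ₜ[ℤ] toMA c + toMA c ⊗ₜ[ℤ] of ℤ π g - NF n ∈ T (π := π) from H b.coeff
  intro c
  induction c using Finsupp.induction with
  | zero =>
      refine ⟨0, by simp, ?_⟩
      rw [map_zero, toMA_zero, TensorProduct.tmul_zero, TensorProduct.zero_tmul]
      simpa using (T (π := π)).zero_mem
  | single_add h k c _ _ ih =>
      obtain ⟨n₁, good₁, h₁⟩ := pair_nf g h
      obtain ⟨n₂, good₂, h₂⟩ := ih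
      refine ⟨k • n₁ + n₂, ?_, ?_⟩
      · intro z hz
        rcases Finset.mem_union.1 (Finsupp.support_add hz) with hz' | hz'
        · exact good₁ z (Finsupp.support_smul hz')
        · exact good₂ z hz'
      · have key := (T (π := π)).add_mem ((T (π := π)).zsmul_mem h₁ k) h₂
        have e : k • (of ℤ π g ⊗ₜ[ℤ] of ℤ π h + of ℤ π h ⊗ₜ[ℤ] of ℤ π g - NF n₁) +
            (of ℤ π g ⊗ₜ[ℤ] toMA c + toMA c ⊗ₜ[ℤ] of ℤ π g - NF n₂)
            = of ℤ π g ⊗ₜ[ℤ] toMA (Finsupp.single h k + c) +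
              toMA (Finsupp.single h k + c) ⊗ₜ[ℤ] of ℤ π g - NF (k • n₁ + n₂) := by
          simp only [toMA_add, toMA_single, map_add, map_zsmul, TensorProduct.tmul_add,
            TensorProduct.add_tmul, TensorProduct.tmul_smul, ← TensorProduct.smul_tmul',
            smul_sub, smul_add, smul_smul]
          abel
        rwa [e] at key

lemma square_nf (a : MonoidAlgebra ℤ π) : ∃ n : π →₀ ℤ, (∀ x ∈ n.support, rep x = x) ∧
    a ⊗ₜ[ℤ] a - NF n ∈ T (π := π) := by
  classical
  suffices H : ∀ c : π →₀ ℤ, ∃ n : π →₀ ℤ, (∀ x ∈ n.support, rep x = x) ∧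
      toMA c ⊗ₜ[ℤ] toMA c - NF n ∈ T (π := π) from H a.coeff
  intro c
  induction c using Finsupp.induction with
  | zero =>
      refine ⟨0, by simp, ?_⟩
      rw [map_zero, toMA_zero, TensorProduct.zero_tmul]
      simpa using (T (π := π)).zero_mem
  | single_add g k c _ _ ih =>
      obtain ⟨n₁, good₁, h₁⟩ := cross_nf g (toMA c)
      obtain ⟨n₂, good₂, h₂⟩ := ih
      refine ⟨Finsupp.single 1 (k * k) + k • n₁ + n₂, ?_, ?_⟩
      · intro z hz
        rcases Finset.mem_union.1 (Finsupp.support_add hz) with hz' | hz'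
        · rcases Finset.mem_union.1 (Finsupp.support_add hz') with hz'' | hz''
          · have := Finsupp.support_single_subset hz''
            simp only [Finset.mem_singleton] at this
            subst this; exact rep_one
          · exact good₁ z (Finsupp.support_smul hz'')
        · exact good₂ z hz'
      · have key := (T (π := π)).add_mem ((T (π := π)).add_mem
          ((T (π := π)).zsmul_mem (sq_one_nf (π := π) g) (k * k))
          ((T (π := π)).zsmul_mem h₁ k)) h₂
        have e : (k * k) • (of ℤ π g ⊗ₜ[ℤ] of ℤ π g - B (1 : π)) +
            k • (of ℤ π g ⊗ₜ[ℤ] toMA c + toMA c ⊗ₜ[ℤ] of ℤ π g - NF n₁) +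
            (toMA c ⊗ₜ[ℤ] toMA c - NF n₂)
            = toMA (Finsupp.single g k + c) ⊗ₜ[ℤ] toMA (Finsupp.single g k + c) -
              NF (Finsupp.single 1 (k * k) + k • n₁ + n₂) := by
          simp only [toMA_add, toMA_single, map_add, map_zsmul, NF_single,
            TensorProduct.tmul_add, TensorProduct.add_tmul, TensorProduct.tmul_smul,
            ← TensorProduct.smul_tmul', smul_sub, smul_add, smul_smul]
          abel
        rwa [e] at key

lemma symGA_nf {m : MonoidAlgebra ℤ π ⊗[ℤ] MonoidAlgebra ℤ π} (hm : m ∈ symGA π) :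
    ∃ n : π →₀ ℤ, (∀ x ∈ n.support, rep x = x) ∧ m - NF n ∈ T (π := π) := by
  classical
  induction hm using AddSubgroup.closure_induction with
  | mem x hx =>
      obtain ⟨a, rfl⟩ := hx
      exact square_nf a
  | zero => exact ⟨0, by simp, by simpa using (T (π := π)).zero_mem⟩
  | add x y _ _ hx hy =>
      obtain ⟨n₁, good₁, h₁⟩ := hx
      obtain ⟨n₂, good₂, h₂⟩ := hy
      refine ⟨n₁ + n₂, ?_, ?_⟩
      · intro z hz
        rcases Finset.mem_union.1 (Finsupp.support_add hz) with hz' | hz'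
        · exact good₁ z hz'
        · exact good₂ z hz'
      · have key := (T (π := π)).add_mem h₁ h₂
        have e : (x - NF n₁) + (y - NF n₂) = x + y - NF (n₁ + n₂) := by
          rw [map_add]; abel
        rwa [e] at key
  | neg x _ hx =>
      obtain ⟨n₁, good₁, h₁⟩ := hx
      refine ⟨-n₁, ?_, ?_⟩
      · intro z hz
        rw [Finsupp.support_neg] at hz
        exact good₁ z hz
      · have key := (T (π := π)).neg_mem h₁
        have e : -(x - NF n₁) = -x - NF (-n₁) := by rw [map_neg]; abel
        rwa [e] at key

lemma theta_NF (n : π →₀ ℤ) : theta (NF n) = n.sum fun x k => k • theta (B x) := by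
  rw [NF, Finsupp.liftAddHom_apply]
  rw [map_finsuppSum]
  refine Finset.sum_congr rfl fun x _ => ?_
  simp only [zmultiplesHom_apply, map_zsmul]

lemma indep {n : π →₀ ℤ} (hgood : ∀ x ∈ n.support, rep x = x) (h : theta (NF n) = 0) :
    n = 0 := by
  classical
  by_contra hne
  obtain ⟨y, hy⟩ := Finsupp.support_nonempty_iff.2 hne
  have h3 : (n.sum fun x k => k • theta (B x)).coeff y = 0 := by
    rw [← theta_NF, h]; rfl
  rw [MonoidAlgebra.coeff_finsuppSum, Finsupp.sum_apply, Finsupp.sum] at h3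
  rw [Finset.sum_eq_single_of_mem y hy] at h3
  · by_cases hy1 : y = 1
    · subst hy1
      rw [theta_B_one, MonoidAlgebra.coeff_smul, MonoidAlgebra.coeff_single, Finsupp.smul_apply, Finsupp.single_apply, if_pos rfl, smul_eq_mul,
        mul_one] at h3
      exact (Finsupp.mem_support_iff.1 hy) h3
    · rw [theta_B_ne_one hy1, MonoidAlgebra.coeff_smul, MonoidAlgebra.coeff_add,
        MonoidAlgebra.coeff_single, MonoidAlgebra.coeff_single, Finsupp.smul_apply, Finsupp.add_apply, Finsupp.single_apply,
        Finsupp.single_apply, if_pos rfl, smul_eq_mul] at h3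
      by_cases hinv : y⁻¹ = y
      · rw [if_pos hinv] at h3
        exact (Finsupp.mem_support_iff.1 hy) (by omega)
      · rw [if_neg hinv] at h3
        exact (Finsupp.mem_support_iff.1 hy) (by omega)
  · intro x hxs hxy
    rw [MonoidAlgebra.coeff_smul, Finsupp.smul_apply]
    by_cases hx1 : x = 1
    · subst hx1
      rw [theta_B_one, MonoidAlgebra.coeff_single, Finsupp.single_apply, if_neg hxy, smul_zero]
    · rw [theta_B_ne_one hx1, MonoidAlgebra.coeff_add, MonoidAlgebra.coeff_single,
        MonoidAlgebra.coeff_single]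
      have hne2 : x⁻¹ ≠ y := fun hc => hxy (rep_fix_inv (hgood x hxs) (hgood y hy) hc)
      rw [Finsupp.add_apply, Finsupp.single_apply, Finsupp.single_apply, if_neg hxy,
        if_neg hne2, add_zero, smul_zero]

lemma val_relSym_relGA {t : ↥(symGA π)} (ht : t ∈ relSymGA π) :
    (t : MonoidAlgebra ℤ π ⊗[ℤ] MonoidAlgebra ℤ π) ∈ relGA π := by
  induction ht using AddSubgroup.closure_induction with
  | mem x hx =>
      obtain ⟨g, m, hm⟩ := hx
      rw [hm]
      exact AddSubgroup.subset_closure ⟨g, (m : MonoidAlgebra ℤ π ⊗[ℤ] MonoidAlgebra ℤ π), rfl⟩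
  | zero => exact (relGA π).zero_mem
  | add x y _ _ hx hy => exact (relGA π).add_mem hx hy
  | neg x _ hx => exact (relGA π).neg_mem hx

lemma mem_T_lift {v : MonoidAlgebra ℤ π ⊗[ℤ] MonoidAlgebra ℤ π} (hv : v ∈ T (π := π)) :
    ∃ t : ↥(symGA π), t ∈ relSymGA π ∧ (t : MonoidAlgebra ℤ π ⊗[ℤ] MonoidAlgebra ℤ π) = v := by
  induction hv using AddSubgroup.closure_induction with
  | mem x hx =>
      obtain ⟨g, m, hm, rfl⟩ := hx
      refine ⟨⟨diagAct π g m - m, (symGA π).sub_mem (diagAct_mem_symGA g hm) hm⟩, ?_, rfl⟩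
      exact AddSubgroup.subset_closure ⟨g, ⟨m, hm⟩, rfl⟩
  | zero => exact ⟨0, (relSymGA π).zero_mem, rfl⟩
  | add x y _ _ hx hy =>
      obtain ⟨t₁, ht₁, hv₁⟩ := hx
      obtain ⟨t₂, ht₂, hv₂⟩ := hy
      exact ⟨t₁ + t₂, (relSymGA π).add_mem ht₁ ht₂, by rw [AddSubgroup.coe_add, hv₁, hv₂]⟩
  | neg x _ hx =>
      obtain ⟨t₁, ht₁, hv₁⟩ := hx
      exact ⟨-t₁, (relSymGA π).neg_mem ht₁, by rw [AddSubgroup.coe_neg, hv₁]⟩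

end VarpiAux

open VarpiAux

/-- the map `ϖ : ℤ ⊗_{ℤπ} Γ(ℤπ) → ℤπ ⊗_{ℤπ} ℤπ` induced by the inclusion of the
symmetric tensors `Γ(ℤπ) ⊆ ℤπ ⊗_ℤ ℤπ` is injective. -/
theorem varpi_injective_for_group_ring :
    ∃ f : (↥(symGA π) ⧸ relSymGA π) →+
        ((MonoidAlgebra ℤ π ⊗[ℤ] MonoidAlgebra ℤ π) ⧸ relGA π),
      (∀ m : ↥(symGA π),
        f (QuotientAddGroup.mk m) =
          QuotientAddGroup.mk (m : MonoidAlgebra ℤ π ⊗[ℤ] MonoidAlgebra ℤ π)) ∧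
      Function.Injective f := by
  have hker : ∀ s ∈ relSymGA π,
      ((QuotientAddGroup.mk' (relGA π)).comp (symGA π).subtype) s = 0 := by
    intro s hs
    rw [AddMonoidHom.comp_apply]
    exact (QuotientAddGroup.eq_zero_iff _).2 (val_relSym_relGA hs)
  refine ⟨QuotientAddGroup.lift (relSymGA π)
    ((QuotientAddGroup.mk' (relGA π)).comp (symGA π).subtype) hker, fun m => rfl, ?_⟩
  rw [injective_iff_map_eq_zero]
  intro a ha
  obtain ⟨s, rfl⟩ := QuotientAddGroup.mk'_surjective (relSymGA π) a
  have ha' : ((s : MonoidAlgebra ℤ π ⊗[ℤ] MonoidAlgebra ℤ π) :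
      (MonoidAlgebra ℤ π ⊗[ℤ] MonoidAlgebra ℤ π) ⧸ relGA π) = 0 := ha
  have hs : (s : MonoidAlgebra ℤ π ⊗[ℤ] MonoidAlgebra ℤ π) ∈ relGA π :=
    (QuotientAddGroup.eq_zero_iff _).1 ha'
  have hθ : theta (s : MonoidAlgebra ℤ π ⊗[ℤ] MonoidAlgebra ℤ π) = 0 := theta_relGA hs
  obtain ⟨n, hgood, hT⟩ := symGA_nf s.2
  have hθNF : theta (NF n) = 0 := by
    have h2 := theta_relGA (T_le_relGA hT)
    rw [map_sub, hθ, zero_sub, neg_eq_zero] at h2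
    exact h2
  rw [indep hgood hθNF, map_zero, sub_zero] at hT
  obtain ⟨t, htmem, htv⟩ := mem_T_lift hT
  have hts : t = s := Subtype.ext htv
  rw [← hts] at *
  exact (QuotientAddGroup.eq_zero_iff t).2 htmem
end
end

section
/- Let π = ℤ × ℤ/2 = ⟨T, t | [T,t], T²⟩, let I ⊆ ℤπ be the submodule generated by 1−t and 1−T, and let I^w ⊆ ℤπ be the submodule generated by 1−t and 1+T. Let ℤ/2 act on these modules by multiplication by T, and write Ĥⁱ(ℤ/2; P) for Tate cohomology (Ĥ⁰ = ker(1−T)/im(1+T), Ĥ¹ = ker(1+T)/im(1−T)). Then: Ĥ⁰(ℤ/2; I^w) ≅ ℤ/2 generated by 1+T; Ĥ¹(ℤ/2; I) ≅ ℤ/2 generated by 1−T; and Ĥ⁰(ℤ/2; ℤπ) = Ĥ¹(ℤ/2; ℤπ) = Ĥ⁰(ℤ/2; I) = Ĥ¹(ℤ/2; I^w) = 0. -/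
noncomputable section

set_option maxHeartbeats 2000000

open MonoidAlgebra

/-- The group `π = ℤ × ℤ/2 = ⟨t, T⟩`, written multiplicatively. -/
abbrev ZxZ2 : Type := Multiplicative (ℤ × ZMod 2)

/-- The generator `t` of infinite order. -/
def tG : ZxZ2 := Multiplicative.ofAdd (1, 0)

/-- The generator `T` of order 2. -/
def TG : ZxZ2 := Multiplicative.ofAdd (0, 1)

/-- The augmentation ideal `I ⊆ ℤπ`, generated by `1 - t` and `1 - T`. -/
def augI : Submodule (MonoidAlgebra ℤ ZxZ2) (MonoidAlgebra ℤ ZxZ2) :=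
  Submodule.span (MonoidAlgebra ℤ ZxZ2) {1 - of ℤ ZxZ2 tG, 1 - of ℤ ZxZ2 TG}

/-- The submodule `I^w ⊆ ℤπ`, generated by `1 - t` and `1 + T`. -/
def augIw : Submodule (MonoidAlgebra ℤ ZxZ2) (MonoidAlgebra ℤ ZxZ2) :=
  Submodule.span (MonoidAlgebra ℤ ZxZ2) {1 - of ℤ ZxZ2 tG, 1 + of ℤ ZxZ2 TG}

/-- Tate cohomology `Ĥ⁰(ℤ/2; A) = ker(1 - τ)/im(1 + τ)` for the action of `ℤ/2` on an abelian
group `A` by an (involutive) endomorphism `τ`. -/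
abbrev tateZero {A : Type*} [AddCommGroup A] (τ : A →+ A) : Type _ :=
  ↥(AddMonoidHom.ker (AddMonoidHom.id A - τ)) ⧸
    ((AddMonoidHom.id A + τ).range.addSubgroupOf (AddMonoidHom.ker (AddMonoidHom.id A - τ)))

/-- Tate cohomology `Ĥ¹(ℤ/2; A) = ker(1 + τ)/im(1 - τ)`. -/
abbrev tateOne {A : Type*} [AddCommGroup A] (τ : A →+ A) : Type _ :=
  ↥(AddMonoidHom.ker (AddMonoidHom.id A + τ)) ⧸
    ((AddMonoidHom.id A - τ).range.addSubgroupOf (AddMonoidHom.ker (AddMonoidHom.id A + τ)))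

/-- Multiplication by `T`, as an endomorphism of a `ℤπ`-submodule `P ⊆ ℤπ`. -/
def tauSub (P : Submodule (MonoidAlgebra ℤ ZxZ2) (MonoidAlgebra ℤ ZxZ2)) : ↥P →+ ↥P :=
  AddMonoidHom.mk'
    (fun x => ⟨of ℤ ZxZ2 TG * (x : MonoidAlgebra ℤ ZxZ2), P.smul_mem (of ℤ ZxZ2 TG) x.2⟩)
    (by intro a b; apply Subtype.ext; simp [mul_add])

/-- Multiplication by `T` on `ℤπ` itself. -/
def tauR : MonoidAlgebra ℤ ZxZ2 →+ MonoidAlgebra ℤ ZxZ2 :=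
  AddMonoidHom.mulLeft (of ℤ ZxZ2 TG)


abbrev R := MonoidAlgebra ℤ ZxZ2

lemma TG_mul_TG : TG * TG = 1 := by decide
lemma TG_inv : TG⁻¹ = TG := by decide

def evn (g : ZxZ2) : Prop := (Multiplicative.toAdd g).2 = 0
instance : DecidablePred evn := fun g => inferInstanceAs (Decidable (_ = _))

lemma evn_one : evn 1 := by decide
lemma evn_tG : evn tG := by decide
lemma not_evn_TG : ¬ evn TG := by decide

lemma evn_T_mul (g : ZxZ2) : evn (TG * g) ↔ ¬ evn g := by
  have h : ∀ a : ZMod 2, (1 + a = 0 ↔ ¬ a = 0) := by decide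
  simpa [evn, TG] using h (Multiplicative.toAdd g).2

def chiu : ZxZ2 →* ℤˣ where
  toFun g := if evn g then 1 else -1
  map_one' := by simp [evn]
  map_mul' a b := by
    have h : ∀ x y : ZMod 2, (x + y = 0 ↔ (x = 0 ↔ y = 0)) := by decide
    by_cases ha : evn a <;> by_cases hb : evn b <;>
      simp_all [evn, h (Multiplicative.toAdd a).2 (Multiplicative.toAdd b).2]

lemma g_eq (g : ZxZ2) :
    g = tG ^ (Multiplicative.toAdd g).1 * TG ^ ((Multiplicative.toAdd g).2).val := by
  apply Multiplicative.toAdd.injective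
  simp [tG, TG, Prod.ext_iff]

section generic
variable (χ : ZxZ2 →* ℤˣ)

def epsg : R →ₐ[ℤ] ℤ := lift ℤ ℤ ZxZ2 ((Units.coeHom ℤ).comp χ)

lemma epsg_of (g : ZxZ2) : epsg χ (of ℤ ZxZ2 g) = χ g := by simp [epsg]

lemma epsg_one : epsg χ 1 = 1 := map_one _

lemma of_sub_chi_mem (J : Submodule R R)
    (ht : of ℤ ZxZ2 tG - ((χ tG : ℤ) : R) ∈ J)
    (hT : of ℤ ZxZ2 TG - ((χ TG : ℤ) : R) ∈ J) (g : ZxZ2) :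
    of ℤ ZxZ2 g - ((χ g : ℤ) : R) ∈ J := by
  let S : Subgroup ZxZ2 :=
  { carrier := {g | of ℤ ZxZ2 g - ((χ g : ℤ) : R) ∈ J}
    one_mem' := by simp [← MonoidAlgebra.one_def]
    mul_mem' := by
      intro a b ha hb
      have key : of ℤ ZxZ2 (a * b) - ((χ (a*b) : ℤ) : R)
          = of ℤ ZxZ2 a * (of ℤ ZxZ2 b - ((χ b : ℤ) : R))
            + ((χ b : ℤ) : R) * (of ℤ ZxZ2 a - ((χ a : ℤ) : R)) := by
        rw [map_mul, map_mul]
        push_cast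
        ring
      rw [Set.mem_setOf_eq, key]
      exact J.add_mem (J.smul_mem _ hb) (J.smul_mem _ ha)
    inv_mem' := by
      intro a ha
      have hcc : ((χ a : ℤ) : R) * ((χ a⁻¹ : ℤ) : R) = 1 := by
        rw [← Int.cast_mul, ← Units.val_mul, ← map_mul, mul_inv_cancel]
        simp
      have hoo : of ℤ ZxZ2 a⁻¹ * of ℤ ZxZ2 a = 1 := by
        rw [← map_mul, inv_mul_cancel, map_one]
      have key : of ℤ ZxZ2 a⁻¹ - ((χ a⁻¹ : ℤ) : R)
          = -(((χ a⁻¹ : ℤ) : R) * (of ℤ ZxZ2 a⁻¹ * (of ℤ ZxZ2 a - ((χ a : ℤ) : R)))) := by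
        rw [mul_sub, hoo, mul_sub, mul_one]
        linear_combination (-(of ℤ ZxZ2 a⁻¹)) * hcc
      rw [Set.mem_setOf_eq, key]
      exact J.neg_mem (J.smul_mem _ (J.smul_mem _ ha)) }
  have hgen : g ∈ S := by
    rw [g_eq g]
    exact S.mul_mem (S.zpow_mem ht _) (S.pow_mem hT _)
  exact hgen

lemma sub_epsg_mem (J : Submodule R R)
    (ht : of ℤ ZxZ2 tG - ((χ tG : ℤ) : R) ∈ J)
    (hT : of ℤ ZxZ2 TG - ((χ TG : ℤ) : R) ∈ J) (x : R) :
    x - ((epsg χ x : ℤ) : R) ∈ J := by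
  induction x using MonoidAlgebra.induction_on with
  | of g => rw [epsg_of]; exact of_sub_chi_mem χ J ht hT g
  | add x y hx hy =>
      have : x + y - ((epsg χ (x + y) : ℤ) : R)
          = (x - ((epsg χ x : ℤ) : R)) + (y - ((epsg χ y : ℤ) : R)) := by
        rw [map_add]; push_cast; ring
      rw [this]; exact J.add_mem hx hy
  | smul r x hx =>
      have : r • x - ((epsg χ (r • x) : ℤ) : R)
          = (r : R) * (x - ((epsg χ x : ℤ) : R)) := by
        rw [map_smul, zsmul_eq_mul, smul_eq_mul, mul_sub]
        push_cast; ring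
      rw [this]; exact J.smul_mem _ hx
end generic

def trivchi : ZxZ2 →* ℤˣ := 1

def eps : R →ₐ[ℤ] ℤ := epsg trivchi
def epsw : R →ₐ[ℤ] ℤ := epsg chiu

lemma epsg_single (χ : ZxZ2 →* ℤˣ) (a : ZxZ2) (c : ℤ) :
    epsg χ (MonoidAlgebra.single a c) = c * χ a := by
  rw [epsg, MonoidAlgebra.lift_single]; simp

lemma eps_of (g : ZxZ2) : eps (of ℤ ZxZ2 g) = 1 := by
  rw [eps, epsg_of]; simp [trivchi]
lemma eps_single (a : ZxZ2) (c : ℤ) : eps (MonoidAlgebra.single a c) = c := by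
  simp [eps, epsg_single, trivchi]
lemma epsw_single (a : ZxZ2) (c : ℤ) :
    epsw (MonoidAlgebra.single a c) = if evn a then c else -c := by
  rw [epsw, epsg_single]
  by_cases h : evn a <;> simp [chiu, h]
lemma epsw_of (g : ZxZ2) : epsw (of ℤ ZxZ2 g) = if evn g then 1 else -1 := by
  rw [epsw, epsg_of]
  by_cases h : evn g <;> simp [chiu, h]


lemma mem_augI (x : R) : x ∈ augI ↔ eps x = 0 := by
  constructor
  · intro hx
    have hle : augI ≤ RingHom.ker eps.toRingHom := by
      rw [augI, Submodule.span_le]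
      intro y hy
      simp only [Set.mem_insert_iff, Set.mem_singleton_iff] at hy
      rcases hy with rfl | rfl <;>
        simp [RingHom.mem_ker, eps_single]
    simpa [RingHom.mem_ker] using hle hx
  · intro hx
    have ht : of ℤ ZxZ2 tG - ((trivchi tG : ℤ) : R) ∈ augI := by
      have : of ℤ ZxZ2 tG - ((trivchi tG : ℤ) : R) = -(1 - of ℤ ZxZ2 tG) := by
        simp [trivchi]
      rw [this]
      exact neg_mem (Submodule.subset_span (Set.mem_insert _ _))
    have hT : of ℤ ZxZ2 TG - ((trivchi TG : ℤ) : R) ∈ augI := by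
      have : of ℤ ZxZ2 TG - ((trivchi TG : ℤ) : R) = -(1 - of ℤ ZxZ2 TG) := by
        simp [trivchi]
      rw [this]
      exact neg_mem (Submodule.subset_span (Set.mem_insert_of_mem _ rfl))
    have := sub_epsg_mem trivchi augI ht hT x
    rw [show epsg trivchi x = eps x from rfl, hx] at this
    simpa using this

lemma mem_augIw (x : R) : x ∈ augIw ↔ epsw x = 0 := by
  constructor
  · intro hx
    have hle : augIw ≤ RingHom.ker epsw.toRingHom := by
      rw [augIw, Submodule.span_le]
      intro y hy
      simp only [Set.mem_insert_iff, Set.mem_singleton_iff] at hy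
      rcases hy with rfl | rfl <;>
        simp [RingHom.mem_ker, epsw_single, evn_one, not_evn_TG, evn_tG]
    simpa [RingHom.mem_ker] using hle hx
  · intro hx
    have ht : of ℤ ZxZ2 tG - ((chiu tG : ℤ) : R) ∈ augIw := by
      have : of ℤ ZxZ2 tG - ((chiu tG : ℤ) : R) = -(1 - of ℤ ZxZ2 tG) := by
        simp [chiu, show evn tG from by decide]
      rw [this]
      exact neg_mem (Submodule.subset_span (Set.mem_insert _ _))
    have hT : of ℤ ZxZ2 TG - ((chiu TG : ℤ) : R) ∈ augIw := by
      have : of ℤ ZxZ2 TG - ((chiu TG : ℤ) : R) = 1 + of ℤ ZxZ2 TG := by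
        simp [chiu, not_evn_TG]
        ring
      rw [this]
      exact Submodule.subset_span (Set.mem_insert_of_mem _ rfl)
    have := sub_epsg_mem chiu augIw ht hT x
    rw [show epsg chiu x = epsw x from rfl, hx] at this
    simpa using this


def efil (x : R) : R := MonoidAlgebra.ofCoeff (Finsupp.filter evn x.coeff)

def Fh : R →+ ℤ :=
  AddMonoidHom.mk' (fun x => eps (efil x)) (by
    intro a b
    rw [← map_add]
    congr 1
    exact congrArg MonoidAlgebra.ofCoeff (Finsupp.filter_add ..))

lemma Fh_apply (x : R) : Fh x = eps (efil x) := rfl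

lemma efil_single (a : ZxZ2) (c : ℤ) :
    efil (MonoidAlgebra.single a c) = if evn a then MonoidAlgebra.single a c else 0 := by
  by_cases h : evn a
  · rw [efil, if_pos h]; exact congrArg MonoidAlgebra.ofCoeff (Finsupp.filter_single_of_pos _ h)
  · rw [efil, if_neg h]; exact congrArg MonoidAlgebra.ofCoeff (Finsupp.filter_single_of_neg _ h)

lemma Fh_single (a : ZxZ2) (c : ℤ) :
    Fh (MonoidAlgebra.single a c) = if evn a then c else 0 := by
  rw [Fh_apply, efil_single]
  by_cases h : evn a <;> simp [h, eps_single]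

lemma Fh_one : Fh 1 = 1 := by
  rw [MonoidAlgebra.one_def, Fh_single, if_pos evn_one]

lemma eps_filter (x : R) : eps (efil x) = Fh x := rfl

lemma eps_add_epsw (x : R) : eps x + epsw x = 2 * Fh x := by
  induction x using MonoidAlgebra.induction_linear with
  | zero => simp
  | add f g hf hg =>
      rw [map_add, map_add, map_add]
      ring_nf
      linarith
  | single a b =>
      rw [eps_single, epsw_single, Fh_single]
      by_cases h : evn a <;> simp [h] <;> ring

lemma Fh_T (x : R) : Fh (of ℤ ZxZ2 TG * x) = eps x - Fh x := by
  induction x using MonoidAlgebra.induction_linear with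
  | zero => simp
  | add f g hf hg =>
      rw [mul_add, map_add, map_add,
        map_add, hf, hg]
      ring
  | single a b =>
      rw [MonoidAlgebra.of_apply, MonoidAlgebra.single_mul_single, one_mul, Fh_single,
        Fh_single, eps_single]
      by_cases h : evn a <;> simp [evn_T_mul, h]

lemma efil_idem (x : R) : efil (efil x) = efil x := by
  refine MonoidAlgebra.ext (Finsupp.ext fun a => ?_)
  rw [show (efil (efil x)).coeff a = if evn a then (efil x).coeff a else 0 from Finsupp.filter_apply _ _ a,
    show (efil x).coeff a = if evn a then x.coeff a else 0 from Finsupp.filter_apply _ _ a]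
  by_cases h : evn a <;> simp [h]

lemma Fh_filter (x : R) : Fh (efil x) = Fh x := by
  rw [Fh_apply, efil_idem, ← Fh_apply]

lemma epsw_filter (x : R) : epsw (efil x) = Fh x := by
  have h := eps_add_epsw (efil x)
  rw [eps_filter, Fh_filter] at h
  linarith

lemma key_plus (x : R) (hx : of ℤ ZxZ2 TG * x = x) :
    efil x + of ℤ ZxZ2 TG * efil x = x := by
  have hx' : ∀ g : ZxZ2, x.coeff (TG * g) = x.coeff g := by
    intro g
    have h : (of ℤ ZxZ2 TG * x).coeff g = x.coeff g := by rw [hx]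
    rwa [MonoidAlgebra.of_apply, MonoidAlgebra.coeff_single_mul_apply, one_mul, TG_inv] at h
  refine MonoidAlgebra.ext (Finsupp.ext fun g => ?_)
  rw [MonoidAlgebra.coeff_add, Finsupp.add_apply, MonoidAlgebra.of_apply, MonoidAlgebra.coeff_single_mul_apply, one_mul,
    TG_inv]
  rw [show (efil x).coeff (TG * g) = if evn (TG * g) then x.coeff (TG * g) else 0 from
    Finsupp.filter_apply _ _ _, show (efil x).coeff g = if evn g then x.coeff g else 0 from
    Finsupp.filter_apply _ _ _]
  by_cases h : evn g
  · simp [h, evn_T_mul]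
  · simp [h, evn_T_mul, hx' g]

lemma key_minus (x : R) (hx : of ℤ ZxZ2 TG * x = -x) :
    efil x - of ℤ ZxZ2 TG * efil x = x := by
  have hx' : ∀ g : ZxZ2, x.coeff (TG * g) = -x.coeff g := by
    intro g
    have h : (of ℤ ZxZ2 TG * x).coeff g = (-x).coeff g := by rw [hx]
    rwa [MonoidAlgebra.of_apply, MonoidAlgebra.coeff_single_mul_apply, one_mul, TG_inv,
      MonoidAlgebra.coeff_neg, Finsupp.neg_apply] at h
  refine MonoidAlgebra.ext (Finsupp.ext fun g => ?_)
  rw [MonoidAlgebra.coeff_sub, Finsupp.sub_apply, MonoidAlgebra.of_apply, MonoidAlgebra.coeff_single_mul_apply, one_mul,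
    TG_inv]
  rw [show (efil x).coeff (TG * g) = if evn (TG * g) then x.coeff (TG * g) else 0 from
    Finsupp.filter_apply _ _ _, show (efil x).coeff g = if evn g then x.coeff g else 0 from
    Finsupp.filter_apply _ _ _]
  by_cases h : evn g
  · simp [h, evn_T_mul]
  · simp [h, evn_T_mul, hx' g]

lemma TT : of ℤ ZxZ2 TG * of ℤ ZxZ2 TG = (1 : R) := by
  rw [← map_mul, TG_mul_TG, map_one]

lemma tauSub_val (P : Submodule R R) (x : ↥P) :
    ((tauSub P x : ↥P) : R) = of ℤ ZxZ2 TG * (x : R) := rfl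

def phiK (P : Submodule R R) (K : AddSubgroup ↥P) : ↥K →+ ZMod 2 :=
  (Int.castAddHom (ZMod 2)).comp (Fh.comp ((P.subtype.toAddMonoidHom).comp K.subtype))

lemma phiK_apply (P : Submodule R R) (K : AddSubgroup ↥P) (x : ↥K) :
    phiK P K x = ((Fh (((x : ↥P)) : R) : ℤ) : ZMod 2) := rfl

lemma two_zmod2 (k : ℤ) : ((2 * k : ℤ) : ZMod 2) = 0 := by
  rw [ZMod.intCast_zmod_eq_zero_iff_dvd]
  push_cast
  exact dvd_mul_right 2 k

lemma zmod2_cases : ∀ c : ZMod 2, c = 0 ∨ c = 1 := by decide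

lemma subsingleton_quot {G : Type*} [AddGroup G] {N : AddSubgroup G} (h : N = ⊤) :
    Subsingleton (G ⧸ N) := by
  subst h
  exact QuotientAddGroup.subsingleton_quotient_top

lemma mem_ker_sub_iff (P : Submodule R R) (x : ↥P) :
    x ∈ AddMonoidHom.ker (AddMonoidHom.id ↥P - tauSub P) ↔
      of ℤ ZxZ2 TG * (x : R) = (x : R) := by
  rw [AddMonoidHom.mem_ker, AddMonoidHom.sub_apply, AddMonoidHom.id_apply, sub_eq_zero]
  constructor
  · intro h
    exact (congrArg Subtype.val h).symm
  · intro h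
    exact Subtype.ext h.symm

lemma mem_ker_add_iff (P : Submodule R R) (x : ↥P) :
    x ∈ AddMonoidHom.ker (AddMonoidHom.id ↥P + tauSub P) ↔
      of ℤ ZxZ2 TG * (x : R) = -(x : R) := by
  rw [AddMonoidHom.mem_ker, AddMonoidHom.add_apply, AddMonoidHom.id_apply,
    add_eq_zero_iff_eq_neg]
  constructor
  · intro h
    have h' := congrArg Subtype.val h
    rw [show (Subtype.val (-(tauSub P x)) : R) = -(of ℤ ZxZ2 TG * (x : R)) by
      rw [← tauSub_val]; rfl] at h'
    linear_combination h'
  · intro h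
    apply Subtype.ext
    rw [show (Subtype.val (-(tauSub P x)) : R) = -(of ℤ ZxZ2 TG * (x : R)) by
      rw [← tauSub_val]; rfl]
    linear_combination h

lemma mem_range_add (P : Submodule R R) (x : ↥P) (y : R) (hy : y ∈ P)
    (h : y + of ℤ ZxZ2 TG * y = (x : R)) :
    x ∈ (AddMonoidHom.id ↥P + tauSub P).range := by
  refine ⟨⟨y, hy⟩, ?_⟩
  apply Subtype.ext
  rw [AddMonoidHom.add_apply, AddMonoidHom.id_apply]
  rw [show (Subtype.val ((⟨y, hy⟩ : ↥P) + tauSub P ⟨y, hy⟩) : R)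
    = y + of ℤ ZxZ2 TG * y from rfl]
  exact h

lemma mem_range_sub (P : Submodule R R) (x : ↥P) (y : R) (hy : y ∈ P)
    (h : y - of ℤ ZxZ2 TG * y = (x : R)) :
    x ∈ (AddMonoidHom.id ↥P - tauSub P).range := by
  refine ⟨⟨y, hy⟩, ?_⟩
  apply Subtype.ext
  rw [AddMonoidHom.sub_apply, AddMonoidHom.id_apply]
  rw [show (Subtype.val ((⟨y, hy⟩ : ↥P) - tauSub P ⟨y, hy⟩) : R)
    = y - of ℤ ZxZ2 TG * y from rfl]
  exact h

lemma Fh_onePlusT : Fh (1 + of ℤ ZxZ2 TG) = 1 := by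
  rw [map_add, Fh_one, MonoidAlgebra.of_apply, Fh_single, if_neg not_evn_TG, add_zero]

lemma Fh_oneSubT : Fh (1 - of ℤ ZxZ2 TG) = 1 := by
  rw [map_sub, Fh_one, MonoidAlgebra.of_apply, Fh_single, if_neg not_evn_TG, sub_zero]


/-- with `ℤ/2` acting by multiplication by `T`:
`Ĥ⁰(ℤ/2; I^w) ≅ ℤ/2` generated by `1 + T`; `Ĥ¹(ℤ/2; I) ≅ ℤ/2` generated by `1 - T`; and
`Ĥ⁰(ℤ/2; ℤπ) = Ĥ¹(ℤ/2; ℤπ) = Ĥ⁰(ℤ/2; I) = Ĥ¹(ℤ/2; I^w) = 0`. -/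
theorem tate_cohomology_of_I_and_Iw :
    (∃ (hm : (1 + of ℤ ZxZ2 TG) ∈ augIw)
        (hk : (⟨1 + of ℤ ZxZ2 TG, hm⟩ : ↥augIw) ∈
          AddMonoidHom.ker (AddMonoidHom.id ↥augIw - tauSub augIw)),
      ∃ e : tateZero (tauSub augIw) ≃+ ZMod 2,
        e (QuotientAddGroup.mk ⟨⟨1 + of ℤ ZxZ2 TG, hm⟩, hk⟩) = 1) ∧
    (∃ (hm : (1 - of ℤ ZxZ2 TG) ∈ augI)
        (hk : (⟨1 - of ℤ ZxZ2 TG, hm⟩ : ↥augI) ∈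
          AddMonoidHom.ker (AddMonoidHom.id ↥augI + tauSub augI)),
      ∃ e : tateOne (tauSub augI) ≃+ ZMod 2,
        e (QuotientAddGroup.mk ⟨⟨1 - of ℤ ZxZ2 TG, hm⟩, hk⟩) = 1) ∧
    Subsingleton (tateZero tauR) ∧ Subsingleton (tateOne tauR) ∧
    Subsingleton (tateZero (tauSub augI)) ∧ Subsingleton (tateOne (tauSub augIw)) := by

  have hmw : (1 + of ℤ ZxZ2 TG) ∈ augIw :=
    Submodule.subset_span (Set.mem_insert_of_mem _ rfl)
  have hmi : (1 - of ℤ ZxZ2 TG) ∈ augI :=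
    Submodule.subset_span (Set.mem_insert_of_mem _ rfl)
  have hkw : (⟨1 + of ℤ ZxZ2 TG, hmw⟩ : ↥augIw) ∈
      AddMonoidHom.ker (AddMonoidHom.id ↥augIw - tauSub augIw) := by
    rw [mem_ker_sub_iff]
    show of ℤ ZxZ2 TG * (1 + of ℤ ZxZ2 TG) = 1 + of ℤ ZxZ2 TG
    rw [mul_add, mul_one, TT]
    ring
  have hki : (⟨1 - of ℤ ZxZ2 TG, hmi⟩ : ↥augI) ∈
      AddMonoidHom.ker (AddMonoidHom.id ↥augI + tauSub augI) := by
    rw [mem_ker_add_iff]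
    show of ℤ ZxZ2 TG * (1 - of ℤ ZxZ2 TG) = -(1 - of ℤ ZxZ2 TG)
    rw [mul_sub, mul_one, TT]
    ring
  refine ⟨?_, ?_, ?_, ?_, ?_, ?_⟩
  · -- Ĥ⁰(I^w) ≅ ℤ/2
    refine ⟨hmw, hkw, ?_⟩
    have hPhi : (AddMonoidHom.id ↥augIw + tauSub augIw).range.addSubgroupOf
        (AddMonoidHom.ker (AddMonoidHom.id ↥augIw - tauSub augIw)) ≤ (phiK augIw _).ker := by
      intro x hx
      rw [AddSubgroup.mem_addSubgroupOf] at hx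
      obtain ⟨z, hz⟩ := hx
      have hz' : (z : R) + of ℤ ZxZ2 TG * (z : R) = ((x : ↥augIw) : R) := by
        have h := congrArg Subtype.val hz
        rw [AddMonoidHom.add_apply, AddMonoidHom.id_apply] at h
        rw [show (Subtype.val (z + tauSub augIw z) : R)
          = (z : R) + of ℤ ZxZ2 TG * (z : R) from rfl] at h
        exact h
      have hF : Fh (((x : ↥augIw)) : R) = 2 * Fh (z : R) - epsw (z : R) := by
        rw [← hz', map_add, Fh_T]
        have := eps_add_epsw (z : R)
        linarith
      rw [AddMonoidHom.mem_ker, phiK_apply, hF, (mem_augIw _).mp z.2, sub_zero, two_zmod2]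
    have hker : ∀ x : ↥(AddMonoidHom.ker (AddMonoidHom.id ↥augIw - tauSub augIw)),
        phiK augIw _ x = 0 → x ∈ (AddMonoidHom.id ↥augIw + tauSub augIw).range.addSubgroupOf
          (AddMonoidHom.ker (AddMonoidHom.id ↥augIw - tauSub augIw)) := by
      intro x h0
      obtain ⟨k, hk⟩ : (2 : ℤ) ∣ Fh (((x : ↥augIw)) : R) := by
        rwa [phiK_apply, ZMod.intCast_zmod_eq_zero_iff_dvd] at h0
      have hfix : of ℤ ZxZ2 TG * ((x : ↥augIw) : R) = ((x : ↥augIw) : R) :=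
        (mem_ker_sub_iff _ _).mp x.2
      have hy1 : (efil ((x : ↥augIw) : R) - (k : R) * (1 - of ℤ ZxZ2 TG))
          + of ℤ ZxZ2 TG * (efil ((x : ↥augIw) : R) - (k : R) * (1 - of ℤ ZxZ2 TG))
          = ((x : ↥augIw) : R) := by
        linear_combination key_plus _ hfix + ((k : ℤ) : R) * TT
      have hy2 : epsw (efil ((x : ↥augIw) : R) - (k : R) * (1 - of ℤ ZxZ2 TG)) = 0 := by
        rw [map_sub, map_mul, map_intCast, map_sub, map_one, epsw_of, if_neg not_evn_TG,
          epsw_filter, hk]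
        push_cast
        ring
      rw [AddSubgroup.mem_addSubgroupOf]
      exact mem_range_add _ _ _ ((mem_augIw _).mpr hy2) hy1
    have hgenval : phiK augIw _ (⟨⟨1 + of ℤ ZxZ2 TG, hmw⟩, hkw⟩ :
        ↥(AddMonoidHom.ker (AddMonoidHom.id ↥augIw - tauSub augIw))) = 1 := by
      rw [phiK_apply]
      show ((Fh (1 + of ℤ ZxZ2 TG) : ℤ) : ZMod 2) = 1
      rw [Fh_onePlusT]
      rfl
    have hinj : Function.Injective (QuotientAddGroup.lift _ (phiK augIw _) hPhi) := by
      rw [injective_iff_map_eq_zero]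
      intro q hq
      induction q using QuotientAddGroup.induction_on with
      | H z =>
          rw [QuotientAddGroup.lift_mk'] at hq
          exact (QuotientAddGroup.eq_zero_iff z).mpr (hker z hq)
    have hsurj : Function.Surjective (QuotientAddGroup.lift _ (phiK augIw _) hPhi) := by
      intro c
      rcases zmod2_cases c with rfl | rfl
      · exact ⟨0, map_zero _⟩
      · exact ⟨QuotientAddGroup.mk ⟨⟨1 + of ℤ ZxZ2 TG, hmw⟩, hkw⟩,
          by rw [QuotientAddGroup.lift_mk']; exact hgenval⟩
    have hq : QuotientAddGroup.lift _ (phiK augIw _) hPhi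
        (QuotientAddGroup.mk ⟨⟨1 + of ℤ ZxZ2 TG, hmw⟩, hkw⟩) = 1 := by
      rw [QuotientAddGroup.lift_mk']
      exact hgenval
    exact ⟨AddEquiv.ofBijective _ ⟨hinj, hsurj⟩, hq⟩
  · -- Ĥ¹(I) ≅ ℤ/2
    refine ⟨hmi, hki, ?_⟩
    have hPhi : (AddMonoidHom.id ↥augI - tauSub augI).range.addSubgroupOf
        (AddMonoidHom.ker (AddMonoidHom.id ↥augI + tauSub augI)) ≤ (phiK augI _).ker := by
      intro x hx
      rw [AddSubgroup.mem_addSubgroupOf] at hx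
      obtain ⟨z, hz⟩ := hx
      have hz' : (z : R) - of ℤ ZxZ2 TG * (z : R) = ((x : ↥augI) : R) := by
        have h := congrArg Subtype.val hz
        rw [AddMonoidHom.sub_apply, AddMonoidHom.id_apply] at h
        rw [show (Subtype.val (z - tauSub augI z) : R)
          = (z : R) - of ℤ ZxZ2 TG * (z : R) from rfl] at h
        exact h
      have hF : Fh (((x : ↥augI)) : R) = 2 * Fh (z : R) - eps (z : R) := by
        rw [← hz', map_sub, Fh_T]
        ring
      rw [AddMonoidHom.mem_ker, phiK_apply, hF, (mem_augI _).mp z.2, sub_zero, two_zmod2]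
    have hker : ∀ x : ↥(AddMonoidHom.ker (AddMonoidHom.id ↥augI + tauSub augI)),
        phiK augI _ x = 0 → x ∈ (AddMonoidHom.id ↥augI - tauSub augI).range.addSubgroupOf
          (AddMonoidHom.ker (AddMonoidHom.id ↥augI + tauSub augI)) := by
      intro x h0
      obtain ⟨k, hk⟩ : (2 : ℤ) ∣ Fh (((x : ↥augI)) : R) := by
        rwa [phiK_apply, ZMod.intCast_zmod_eq_zero_iff_dvd] at h0
      have hfix : of ℤ ZxZ2 TG * ((x : ↥augI) : R) = -((x : ↥augI) : R) :=
        (mem_ker_add_iff _ _).mp x.2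
      have hy1 : (efil ((x : ↥augI) : R) - (k : R) * (1 + of ℤ ZxZ2 TG))
          - of ℤ ZxZ2 TG * (efil ((x : ↥augI) : R) - (k : R) * (1 + of ℤ ZxZ2 TG))
          = ((x : ↥augI) : R) := by
        linear_combination key_minus _ hfix + ((k : ℤ) : R) * TT
      have hy2 : eps (efil ((x : ↥augI) : R) - (k : R) * (1 + of ℤ ZxZ2 TG)) = 0 := by
        rw [map_sub, map_mul, map_intCast, map_add, map_one, eps_of, eps_filter, hk]
        push_cast
        ring
      rw [AddSubgroup.mem_addSubgroupOf]
      exact mem_range_sub _ _ _ ((mem_augI _).mpr hy2) hy1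
    have hgenval : phiK augI _ (⟨⟨1 - of ℤ ZxZ2 TG, hmi⟩, hki⟩ :
        ↥(AddMonoidHom.ker (AddMonoidHom.id ↥augI + tauSub augI))) = 1 := by
      rw [phiK_apply]
      show ((Fh (1 - of ℤ ZxZ2 TG) : ℤ) : ZMod 2) = 1
      rw [Fh_oneSubT]
      rfl
    have hinj : Function.Injective (QuotientAddGroup.lift _ (phiK augI _) hPhi) := by
      rw [injective_iff_map_eq_zero]
      intro q hq
      induction q using QuotientAddGroup.induction_on with
      | H z =>
          rw [QuotientAddGroup.lift_mk'] at hq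
          exact (QuotientAddGroup.eq_zero_iff z).mpr (hker z hq)
    have hsurj : Function.Surjective (QuotientAddGroup.lift _ (phiK augI _) hPhi) := by
      intro c
      rcases zmod2_cases c with rfl | rfl
      · exact ⟨0, map_zero _⟩
      · exact ⟨QuotientAddGroup.mk ⟨⟨1 - of ℤ ZxZ2 TG, hmi⟩, hki⟩,
          by rw [QuotientAddGroup.lift_mk']; exact hgenval⟩
    have hq : QuotientAddGroup.lift _ (phiK augI _) hPhi
        (QuotientAddGroup.mk ⟨⟨1 - of ℤ ZxZ2 TG, hmi⟩, hki⟩) = 1 := by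
      rw [QuotientAddGroup.lift_mk']
      exact hgenval
    exact ⟨AddEquiv.ofBijective _ ⟨hinj, hsurj⟩, hq⟩
  · -- Ĥ⁰(ℤπ) = 0
    refine subsingleton_quot (AddSubgroup.addSubgroupOf_eq_top.mpr ?_)
    intro x hx
    rw [AddMonoidHom.mem_ker, AddMonoidHom.sub_apply, AddMonoidHom.id_apply,
      sub_eq_zero] at hx
    have hfix : of ℤ ZxZ2 TG * x = x := by
      rw [show tauR x = of ℤ ZxZ2 TG * x from rfl] at hx
      exact hx.symm
    exact ⟨efil x, by
      rw [AddMonoidHom.add_apply, AddMonoidHom.id_apply,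
        show tauR (efil x) = of ℤ ZxZ2 TG * efil x from rfl]
      exact key_plus x hfix⟩
  · -- Ĥ¹(ℤπ) = 0
    refine subsingleton_quot (AddSubgroup.addSubgroupOf_eq_top.mpr ?_)
    intro x hx
    rw [AddMonoidHom.mem_ker, AddMonoidHom.add_apply, AddMonoidHom.id_apply,
      add_eq_zero_iff_eq_neg, show tauR x = of ℤ ZxZ2 TG * x from rfl] at hx
    have hfix : of ℤ ZxZ2 TG * x = -x := by linear_combination hx
    exact ⟨efil x, by
      rw [AddMonoidHom.sub_apply, AddMonoidHom.id_apply,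
        show tauR (efil x) = of ℤ ZxZ2 TG * efil x from rfl]
      exact key_minus x hfix⟩
  · -- Ĥ⁰(I) = 0
    refine subsingleton_quot (AddSubgroup.addSubgroupOf_eq_top.mpr ?_)
    intro x hx
    have hfix : of ℤ ZxZ2 TG * ((x : ↥augI) : R) = ((x : ↥augI) : R) :=
      (mem_ker_sub_iff _ _).mp hx
    have heq := key_plus ((x : ↥augI) : R) hfix
    have heps : eps (efil ((x : ↥augI) : R)) = 0 := by
      have h0 : eps (((x : ↥augI)) : R) = 0 := (mem_augI _).mp x.2
      have h1 : eps (efil ((x : ↥augI) : R) + of ℤ ZxZ2 TG * efil ((x : ↥augI) : R)) = 0 := by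
        rw [heq]; exact h0
      rw [map_add, map_mul, eps_of, one_mul] at h1
      linarith
    exact mem_range_add _ _ _ ((mem_augI _).mpr heps) heq
  · -- Ĥ¹(I^w) = 0
    refine subsingleton_quot (AddSubgroup.addSubgroupOf_eq_top.mpr ?_)
    intro x hx
    have hfix : of ℤ ZxZ2 TG * ((x : ↥augIw) : R) = -((x : ↥augIw) : R) :=
      (mem_ker_add_iff _ _).mp hx
    have heq := key_minus ((x : ↥augIw) : R) hfix
    have hFw : Fh (((x : ↥augIw)) : R) = 0 := by
      have h1 : Fh (of ℤ ZxZ2 TG * ((x : ↥augIw) : R))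
          = eps (((x : ↥augIw)) : R) - Fh (((x : ↥augIw)) : R) := Fh_T _
      rw [hfix, map_neg] at h1
      have h2 := eps_add_epsw (((x : ↥augIw)) : R)
      have h3 : epsw (((x : ↥augIw)) : R) = 0 := (mem_augIw _).mp x.2
      linarith
    have hepsw : epsw (efil ((x : ↥augIw) : R)) = 0 := by
      rw [epsw_filter]
      exact hFw
    exact mem_range_sub _ _ _ ((mem_augIw _).mpr hepsw) heq
end
end
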